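/- Assume D = 0. Then the auxin transport system admits no non-constant periodic solutions: if a : [0,∞) → ℝ^L is a differentiable solution of a'(t) = f(a(t)) with a_i(0) ≥ 0 for all i, and there exists P > 0 such that a(t + P) = a(t) for all t ≥ 0, then a(t) = a(0) for all t ≥ 0. -/

import Mathlib

open Finset Filter

/-- `auxN G κ a i = κ + ∑_{j ~ i} a_j`. -/
noncomputable def auxN {L : ℕ} (G : SimpleGraph (Fin L)) [DecidableRel G.Adj] (κ : ℝ)
    (a : Fin L → ℝ) (i : Fin L) : ℝ :=
  κ + ∑ j ∈ G.neighborFinset i, a j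

/-- The auxin transport vector field
`f_i(a) = D·∑_{k ~ i}(a_k − a_i) + T·∑_{k ~ i}(a_k·a_i/N_k(a) − a_i·a_k/N_i(a))`. -/
noncomputable def auxF {L : ℕ} (G : SimpleGraph (Fin L)) [DecidableRel G.Adj] (κ D T : ℝ)
    (a : Fin L → ℝ) (i : Fin L) : ℝ :=
  D * ∑ k ∈ G.neighborFinset i, (a k - a i) +
    T * ∑ k ∈ G.neighborFinset i,
      (a k * a i / auxN G κ a k - a i * a k / auxN G κ a i)

/-!
Along a nonnegative solution the Lyapunov function `V(a) = ∑ i, a_i N_i(a)` has derivative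
`T ∑_{i ~ k} a_i a_k (N_i - N_k)² / (N_i N_k) ≥ 0`: symmetrising the double sum over the edges
turns `2 ∑ f_i N_i` into this sum of squares. A nondecreasing periodic function is constant, so the
dissipation vanishes along the orbit; then on every edge `a_i a_k = 0` or `N_i = N_k`, which kills
each term of `f`, and `a` is constant.

Nonnegativity is preserved because `f_i(a) = a_i r_i(a)` with a rate `r_i` that stays continuous,
hence locally bounded, while all `N_j > 0`.
-/

open Set Topology

theorem nonneg_of_hasDerivWithinAt_mul {u g : ℝ → ℝ} {s e C : ℝ}
    (hu : ContinuousOn u (Icc s e))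
    (hu' : ∀ t ∈ Ico s e, HasDerivWithinAt u (u t * g t) (Ici t) t)
    (hg : ∀ t ∈ Ico s e, g t ≤ C) (hs : 0 ≤ u s) : ∀ t ∈ Icc s e, 0 ≤ u t := by
  intro t ht
  -- fence `-u` from above by `ε * exp ((C + 1) * x)`, whose growth rate beats `g`
  have fence : ∀ ε > 0, -u t ≤ ε * Real.exp ((C + 1) * t) := by
    intro ε hε
    refine image_le_of_deriv_right_lt_deriv_boundary hu.neg (fun x hx => (hu' x hx).neg)
      (B := fun x => ε * Real.exp ((C + 1) * x))
      (B' := fun x => ε * (Real.exp ((C + 1) * x) * (C + 1))) ?_ ?_ ?_ ht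
    · have := Real.exp_pos ((C + 1) * s)
      rw [Pi.neg_apply]
      nlinarith
    · intro x
      exact ((((hasDerivAt_id x).const_mul (C + 1)).exp).const_mul ε).congr_deriv (by simp)
    · intro x hx hux
      have hB : 0 < ε * Real.exp ((C + 1) * x) := by positivity
      have : -(u x * g x) = ε * Real.exp ((C + 1) * x) * g x := by
        rw [← hux, Pi.neg_apply]; ring
      rw [this]
      nlinarith [hg x hx]
  by_contra! hneg
  have hE := Real.exp_pos ((C + 1) * t)
  have := fence (-u t / (2 * Real.exp ((C + 1) * t))) (div_pos (by linarith) (by positivity))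
  rw [div_mul_eq_mul_div, mul_div_mul_right _ _ hE.ne'] at this
  linarith

theorem MonotoneOn.eq_apply_zero_of_periodic {f : ℝ → ℝ} (hf : MonotoneOn f (Ici 0)) {P : ℝ}
    (hP : 0 < P) (hper : ∀ t, 0 ≤ t → f (t + P) = f t) (t : ℝ) (ht : 0 ≤ t) : f t = f 0 := by
  have hmul : ∀ n : ℕ, f (n * P) = f 0 := by
    intro n
    induction n with
    | zero => simp
    | succ n ih =>
      rw [Nat.cast_succ, add_mul, one_mul, hper _ (by positivity), ih]
  obtain ⟨n, hn⟩ := exists_nat_ge (t / P)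
  have htn : t ≤ n * P := (div_le_iff₀ hP).1 hn
  exact le_antisymm (hmul n ▸ hf ht (mem_Ici.2 (by positivity)) htn) (hf self_mem_Ici ht ht)

theorem eq_zero_of_hasDerivAt_of_nonneg_of_periodic {f f' : ℝ → ℝ} {P : ℝ} (hP : 0 < P)
    (hf : ∀ t, 0 ≤ t → HasDerivAt f (f' t) t) (hf' : ∀ t, 0 ≤ t → 0 ≤ f' t)
    (hper : ∀ t, 0 ≤ t → f (t + P) = f t) (t : ℝ) (ht : 0 ≤ t) : f' t = 0 := by
  have hmono : MonotoneOn f (Ici 0) :=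
    monotoneOn_of_hasDerivWithinAt_nonneg (convex_Ici 0)
      (fun s hs => (hf s hs).continuousAt.continuousWithinAt)
      (fun s hs => (hf s (interior_subset hs)).hasDerivWithinAt)
      (fun s hs => hf' s (interior_subset hs))
  have hconst : HasDerivWithinAt f 0 (Ici t) t :=
    (hasDerivWithinAt_const t _ (f 0)).congr
      (fun s hs => hmono.eq_apply_zero_of_periodic hP hper s (ht.trans hs))
      (hmono.eq_apply_zero_of_periodic hP hper t ht)
  exact (uniqueDiffWithinAt_Ici t).eq_deriv _ (hf t ht).hasDerivWithinAt hconst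

theorem SimpleGraph.sum_sum_neighborFinset_comm {V M : Type*} [Fintype V] [AddCommMonoid M]
    (G : SimpleGraph V) [DecidableRel G.Adj] (F : V → V → M) :
    ∑ i, ∑ k ∈ G.neighborFinset i, F i k = ∑ i, ∑ k ∈ G.neighborFinset i, F k i := by
  simp only [SimpleGraph.neighborFinset_eq_filter, Finset.sum_filter]
  rw [Finset.sum_comm]
  simp only [G.adj_comm]

section Auxin

variable {L : ℕ} (G : SimpleGraph (Fin L)) [DecidableRel G.Adj]

@[fun_prop]
theorem continuous_auxN (κ : ℝ) (i : Fin L) : Continuous fun b => auxN G κ b i := by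
  unfold auxN
  fun_prop

theorem auxN_pos {κ : ℝ} (hκ : 0 < κ) {b : Fin L → ℝ} (hb : 0 ≤ b) (i : Fin L) :
    0 < auxN G κ b i :=
  add_pos_of_pos_of_nonneg hκ (Finset.sum_nonneg fun j _ => hb j)

theorem sum_auxF (κ D T : ℝ) (b : Fin L → ℝ) : ∑ i, auxF G κ D T b i = 0 := by
  simp only [auxF, Finset.sum_add_distrib, ← Finset.mul_sum, Finset.sum_sub_distrib]
  rw [G.sum_sum_neighborFinset_comm fun i k => b k,
    G.sum_sum_neighborFinset_comm fun i k => b k * b i / auxN G κ b k]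
  simp only [sub_self, mul_zero, add_zero]

noncomputable def auxRate (κ T : ℝ) (b : Fin L → ℝ) (i : Fin L) : ℝ :=
  T * ∑ k ∈ G.neighborFinset i, (b k / auxN G κ b k - b k / auxN G κ b i)

theorem auxF_zero_eq_mul_auxRate (κ T : ℝ) (b : Fin L → ℝ) (i : Fin L) :
    auxF G κ 0 T b i = b i * auxRate G κ T b i := by
  rw [auxF, auxRate, zero_mul, zero_add, Finset.mul_sum, Finset.mul_sum, Finset.mul_sum]
  exact Finset.sum_congr rfl fun k _ => by ring

theorem continuousAt_auxRate (κ T : ℝ) {b : Fin L → ℝ} (hb : ∀ j, auxN G κ b j ≠ 0)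
    (i : Fin L) : ContinuousAt (fun b => auxRate G κ T b i) b := by
  unfold auxRate
  fun_prop (disch := exact hb _)

noncomputable def auxLyapunov (κ : ℝ) (b : Fin L → ℝ) : ℝ :=
  ∑ i, b i * auxN G κ b i

noncomputable def auxDissipation (κ : ℝ) (b : Fin L → ℝ) : ℝ :=
  ∑ i, ∑ k ∈ G.neighborFinset i,
    b i * b k * (auxN G κ b i - auxN G κ b k) ^ 2 / (auxN G κ b i * auxN G κ b k)

theorem hasDerivAt_auxLyapunov (κ : ℝ) {a : ℝ → Fin L → ℝ} {a' : Fin L → ℝ} {t : ℝ}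
    (ha : HasDerivAt a a' t) :
    HasDerivAt (fun s => auxLyapunov G κ (a s))
      (2 * ∑ i, a' i * auxN G κ (a t) i - κ * ∑ i, a' i) t := by
  have hcomp : ∀ i, HasDerivAt (fun s => a s i) (a' i) t := hasDerivAt_pi.1 ha
  have hsum : HasDerivAt (fun s => auxLyapunov G κ (a s))
      (∑ i, (a' i * auxN G κ (a t) i + a t i * ∑ j ∈ G.neighborFinset i, a' j)) t := by
    unfold auxLyapunov auxN
    exact HasDerivAt.fun_sum fun i _ => (hcomp i).fun_mul
      (((hasDerivAt_const t κ).fun_add (HasDerivAt.fun_sum fun j _ => hcomp j)).congr_deriv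
        (zero_add _))
  refine hsum.congr_deriv ?_
  have hswap : ∑ i, a t i * ∑ j ∈ G.neighborFinset i, a' j =
      ∑ i, a' i * (auxN G κ (a t) i - κ) := by
    simp only [Finset.mul_sum]
    rw [G.sum_sum_neighborFinset_comm fun i j => a t i * a' j]
    simp only [auxN, add_sub_cancel_left, Finset.mul_sum, mul_comm]
  rw [Finset.sum_add_distrib, hswap]
  simp only [mul_sub, Finset.sum_sub_distrib, ← Finset.sum_mul]
  ring

theorem two_mul_sum_auxF_mul_auxN (κ T : ℝ) {b : Fin L → ℝ} (hb : ∀ j, auxN G κ b j ≠ 0) :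
    2 * ∑ i, auxF G κ 0 T b i * auxN G κ b i = T * auxDissipation G κ b := by
  set N := auxN G κ b with hNdef
  let X : Fin L → Fin L → ℝ := fun i k => b i * b k * N i / N k - b i * b k
  have hX : ∀ i, auxF G κ 0 T b i * N i = T * ∑ k ∈ G.neighborFinset i, X i k := by
    intro i
    simp only [auxF, ← hNdef, zero_mul, zero_add, mul_assoc, Finset.sum_mul]
    congr 1
    exact Finset.sum_congr rfl fun k _ => by simp only [X]; field_simp [hb i, hb k]
  calc 2 * ∑ i, auxF G κ 0 T b i * N i
      = T * (∑ i, ∑ k ∈ G.neighborFinset i, X i k + ∑ i, ∑ k ∈ G.neighborFinset i, X k i) := by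
        simp only [hX, ← Finset.mul_sum, ← G.sum_sum_neighborFinset_comm X]
        ring
    _ = T * auxDissipation G κ b := by
        simp only [auxDissipation, ← hNdef, ← Finset.sum_add_distrib]
        congr 1
        refine Finset.sum_congr rfl fun i _ => Finset.sum_congr rfl fun k _ => ?_
        simp only [X]
        field_simp [hb i, hb k]
        ring

theorem auxDissipation_nonneg {κ : ℝ} (hκ : 0 ≤ κ) {b : Fin L → ℝ} (hb : 0 ≤ b) :
    0 ≤ auxDissipation G κ b := by
  have hN : ∀ j, 0 ≤ auxN G κ b j := fun j =>
    add_nonneg hκ (Finset.sum_nonneg fun k _ => hb k)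
  exact Finset.sum_nonneg fun i _ => Finset.sum_nonneg fun k _ =>
    div_nonneg (mul_nonneg (mul_nonneg (hb i) (hb k)) (sq_nonneg _)) (mul_nonneg (hN i) (hN k))

theorem auxF_zero_eq_zero_of_auxDissipation_eq_zero {κ : ℝ} (hκ : 0 < κ) (T : ℝ)
    {b : Fin L → ℝ} (hb : 0 ≤ b) (h : auxDissipation G κ b = 0) : auxF G κ 0 T b = 0 := by
  set N := auxN G κ b with hNdef
  have hN : ∀ j, 0 < N j := auxN_pos G hκ hb
  have hterm : ∀ i, ∀ k ∈ G.neighborFinset i, b i * b k * (N i - N k) ^ 2 / (N i * N k) = 0 := by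
    have hnn : ∀ i k, 0 ≤ b i * b k * (N i - N k) ^ 2 / (N i * N k) := fun i k =>
      div_nonneg (mul_nonneg (mul_nonneg (hb i) (hb k)) (sq_nonneg _))
        (mul_pos (hN i) (hN k)).le
    intro i k hk
    rw [auxDissipation, Finset.sum_eq_zero_iff_of_nonneg fun i _ =>
      Finset.sum_nonneg fun k _ => hnn i k] at h
    exact (Finset.sum_eq_zero_iff_of_nonneg fun k _ => hnn i k).1 (h i (mem_univ i)) k hk
  funext i
  simp only [auxF, ← hNdef, zero_mul, zero_add, Pi.zero_apply]
  rw [Finset.sum_eq_zero, mul_zero]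
  intro k hk
  obtain hbb | hNN : b i * b k = 0 ∨ N i = N k := by
    simpa [(hN i).ne', (hN k).ne', sub_eq_zero] using hterm i k hk
  · rw [mul_comm (b k), hbb, zero_div, zero_div, sub_self]
  · rw [hNN, mul_comm (b k), sub_self]

variable {G} {κ T : ℝ} {a : ℝ → Fin L → ℝ}

theorem auxin_nonneg_mem_nhdsGT (hκ : 0 < κ)
    (hderiv : ∀ t, 0 ≤ t → HasDerivAt a (auxF G κ 0 T (a t)) t) {x : ℝ} (hx : 0 ≤ x)
    (hax : 0 ≤ a x) : a ⁻¹' Ici 0 ∈ 𝓝[>] x := by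
  have hNpos : ∀ᶠ t in 𝓝[≥] x, ∀ j, 0 < auxN G κ (a t) j :=
    nhdsWithin_le_nhds <| eventually_all.2 fun j =>
      continuousAt_const.eventually_lt
        ((continuous_auxN G κ j).continuousAt.comp (hderiv x hx).continuousAt)
        (auxN_pos G hκ hax j)
  obtain ⟨e, hxe, hNe⟩ := mem_nhdsGE_iff_exists_Icc_subset.1 hNpos
  have hcont : ∀ t ∈ Icc x e, ContinuousAt a t := fun t ht =>
    (hderiv t (hx.trans ht.1)).continuousAt
  filter_upwards [Icc_mem_nhdsGT hxe] with t ht i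
  have hrate : ContinuousOn (fun t => auxRate G κ T (a t) i) (Icc x e) := fun t ht =>
    ((continuousAt_auxRate G κ T (fun j => (hNe ht j).ne') i).comp
      (hcont t ht)).continuousWithinAt
  obtain ⟨C, hC⟩ := isCompact_Icc.bddAbove_image hrate
  refine nonneg_of_hasDerivWithinAt_mul (u := fun t => a t i)
    (g := fun t => auxRate G κ T (a t) i) (C := C)
    (fun t ht => ((continuous_apply i).continuousAt.comp (hcont t ht)).continuousWithinAt)
    (fun t ht => ?_) (fun t ht => hC (mem_image_of_mem _ (Ico_subset_Icc_self ht))) (hax i) t ht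
  show HasDerivWithinAt _ (a t i * auxRate G κ T (a t) i) _ _
  rw [← auxF_zero_eq_mul_auxRate]
  exact (hasDerivAt_pi.1 (hderiv t (hx.trans ht.1)) i).hasDerivWithinAt

theorem auxin_nonneg (hκ : 0 < κ) (hderiv : ∀ t, 0 ≤ t → HasDerivAt a (auxF G κ 0 T (a t)) t)
    (h0 : 0 ≤ a 0) (t : ℝ) (ht : 0 ≤ t) : 0 ≤ a t := by
  have hcont : ContinuousOn a (Icc 0 t) := fun s hs =>
    (hderiv s hs.1).continuousAt.continuousWithinAt
  refine IsClosed.Icc_subset_of_forall_mem_nhdsWithin (s := a ⁻¹' Ici 0) ?_ h0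
    (fun x hx => auxin_nonneg_mem_nhdsGT hκ hderiv hx.2.1 hx.1) ⟨ht, le_rfl⟩
  rw [inter_comm]
  exact hcont.preimage_isClosed_of_isClosed isClosed_Icc isClosed_Ici

end Auxin

theorem auxin_no_periodic_general {L : ℕ} (G : SimpleGraph (Fin L)) [DecidableRel G.Adj]
    (κ T : ℝ) (hκ : 0 < κ) (hT : 0 < T)
    (a : ℝ → Fin L → ℝ)
    (hderiv : ∀ t, 0 ≤ t → HasDerivAt a (auxF G κ 0 T (a t)) t)
    (hnonneg : ∀ i, 0 ≤ a 0 i)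
    (P : ℝ) (hP : 0 < P) (hper : ∀ t, 0 ≤ t → a (t + P) = a t) :
    ∀ t, 0 ≤ t → a t = a 0 := by
  have hpos : ∀ t, 0 ≤ t → 0 ≤ a t := auxin_nonneg hκ hderiv hnonneg
  have hV : ∀ t, 0 ≤ t → HasDerivAt (fun s => auxLyapunov G κ (a s))
      (T * auxDissipation G κ (a t)) t := by
    intro t ht
    refine (hasDerivAt_auxLyapunov G κ (hderiv t ht)).congr_deriv ?_
    rw [sum_auxF, mul_zero, sub_zero,
      two_mul_sum_auxF_mul_auxN G κ T fun j => (auxN_pos G hκ (hpos t ht) j).ne']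
  have hdiss : ∀ t, 0 ≤ t → T * auxDissipation G κ (a t) = 0 :=
    eq_zero_of_hasDerivAt_of_nonneg_of_periodic hP hV
      (fun t ht => mul_nonneg hT.le (auxDissipation_nonneg G hκ.le (hpos t ht)))
      (fun t ht => by simp only [hper t ht])
  have hrest : ∀ t, 0 ≤ t → auxF G κ 0 T (a t) = 0 := fun t ht =>
    auxF_zero_eq_zero_of_auxDissipation_eq_zero G hκ T (hpos t ht)
      ((mul_eq_zero.1 (hdiss t ht)).resolve_left hT.ne')
  intro t ht
  refine constant_of_has_deriv_right_zero
    (fun s hs => (hderiv s hs.1).continuousAt.continuousWithinAt) (fun s hs => ?_) t ⟨ht, le_rfl⟩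
  simpa only [hrest s hs.1] using (hderiv s hs.1).hasDerivWithinAt

/-- For pure transport (`D = 0`), the system admits no non-constant periodic
solution: any periodic nonnegative solution is constant. -/
theorem auxin_no_periodic {L : ℕ} (hL : 1 ≤ L) (G : SimpleGraph (Fin L)) [DecidableRel G.Adj]
    (κ T : ℝ) (hκ : 0 < κ) (hT : 0 < T)
    (a : ℝ → Fin L → ℝ)
    (hderiv : ∀ t, 0 ≤ t → HasDerivAt a (auxF G κ 0 T (a t)) t)
    (hnonneg : ∀ i, 0 ≤ a 0 i)
    (P : ℝ) (hP : 0 < P) (hper : ∀ t, 0 ≤ t → a (t + P) = a t) :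
    ∀ t, 0 ≤ t → a t = a 0 :=
  auxin_no_periodic_general G κ T hκ hT a hderiv hnonneg P hP hper
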